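/- arXiv:2409.14920 — 3 statements merged into one kernel-verified Lean document; each statement's English description precedes it below -/
import Mathlib

section
/- Let x_n, x be càdlàg functions from [a,b] to ℕ (with the discrete metric on ℕ embedded in ℝ), and suppose x_n → x in the Skorokhod metric, where x is non-constant. Then for n large enough, x_n has the same number of jumps as x, and if τ_n denotes the i-th jump time of x_n and τ the i-th jump time of x, then x_n(τ_n) → x(τ) as n → ∞. -/
open Set Filter

/-- Admissible time reparametrizations for the Skorokhod metric on `[a,b]`:
strictly increasing continuous maps of `[a,b]` onto itself fixing the endpoints. -/
def SkorokhodReparams (a b : ℝ) : Set (ℝ → ℝ) :=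
  {l | ContinuousOn l (Icc a b) ∧ StrictMonoOn l (Icc a b) ∧
    MapsTo l (Icc a b) (Icc a b) ∧ l a = a ∧ l b = b}

/-- The Skorokhod distance between two `ℕ`-valued functions on `[a,b]`. -/
noncomputable def skorokhodDist (a b : ℝ) (f g : ℝ → ℕ) : ℝ :=
  sInf {d | 0 ≤ d ∧ ∃ l ∈ SkorokhodReparams a b,
    (∀ t ∈ Icc a b, |l t - t| ≤ d) ∧ (∀ t ∈ Icc a b, |(f (l t) : ℝ) - (g t : ℝ)| ≤ d)}

/-- A `ℕ`-valued function is càdlàg on `[a,b]`: right-continuous (locally constant to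
the right) with left limits (locally constant on small left intervals). -/
def CadlagOn (a b : ℝ) (f : ℝ → ℕ) : Prop :=
  (∀ t ∈ Ico a b, ∃ ε > 0, ∀ s ∈ Icc a b, t ≤ s → s < t + ε → f s = f t) ∧
  (∀ t ∈ Ioc a b, ∃ ε > 0, ∀ s ∈ Icc a b, ∀ u ∈ Icc a b,
    t - ε < s → s < t → t - ε < u → u < t → f s = f u)

/-- `t` is a jump time of `f` in `(a,b]`: every left neighbourhood of `t` contains a
point where `f` differs from `f t`. -/
def JumpTime (a b : ℝ) (f : ℝ → ℕ) (t : ℝ) : Prop :=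
  t ∈ Ioc a b ∧ ∀ ε > 0, ∃ s ∈ Icc a b, t - ε < s ∧ s < t ∧ f s ≠ f t


/-- Distinct naturals differ by at least 1 in ℝ. -/
lemma nat_eq_of_abs_lt_one {p q : ℕ} (h : |(p : ℝ) - (q : ℝ)| < 1) : p = q := by
  rcases lt_trichotomy p q with hlt | he | hgt
  · have h1 : (p : ℝ) + 1 ≤ q := by exact_mod_cast hlt
    have := abs_lt.mp h; linarith
  · exact he
  · have h1 : (q : ℝ) + 1 ≤ p := by exact_mod_cast hgt
    have := abs_lt.mp h; linarith

/-- A càdlàg ℕ-valued function on `[a,b]` is bounded. -/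
lemma cadlag_bdd (a b : ℝ) (f : ℝ → ℕ) (hf : CadlagOn a b f) :
    ∃ M : ℕ, ∀ t ∈ Icc a b, f t ≤ M := by
  have key : ∀ t : ℝ, ∃ ε : ℝ, ∃ M : ℕ, 0 < ε ∧ (t ∈ Icc a b →
      ∀ s ∈ Icc a b, t - ε < s → s < t + ε → f s ≤ M) := by
    intro t
    by_cases ht : t ∈ Icc a b
    · have hright : ∃ ε1 > 0, ∀ s ∈ Icc a b, t ≤ s → s < t + ε1 → f s = f t := by
        rcases eq_or_lt_of_le ht.2 with h | h
        · refine ⟨1, one_pos, fun s hs hts _ => ?_⟩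
          have : s = t := le_antisymm (h ▸ hs.2) hts
          rw [this]
        · exact hf.1 t ⟨ht.1, h⟩
      have hleft : ∃ ε2 > 0, ∃ M2 : ℕ, ∀ s ∈ Icc a b, t - ε2 < s → s < t → f s ≤ M2 := by
        rcases eq_or_lt_of_le ht.1 with h | h
        · exact ⟨1, one_pos, 0, fun s hs _ hst =>
            absurd hst (not_lt.mpr (h ▸ hs.1))⟩
        · obtain ⟨ε2, hε2, hconst⟩ := hf.2 t ⟨h, ht.2⟩
          set s0 := max a (t - ε2 / 2) with hs0def
          have hs0lt : s0 < t := max_lt h (by linarith)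
          have hs0mem : s0 ∈ Icc a b := ⟨le_max_left _ _, le_of_lt (lt_of_lt_of_le hs0lt ht.2)⟩
          have hs0gt : t - ε2 < s0 := lt_of_lt_of_le (by linarith) (le_max_right _ _)
          exact ⟨ε2, hε2, f s0, fun s hs hst1 hst2 =>
            le_of_eq (hconst s hs s0 hs0mem hst1 hst2 hs0gt hs0lt)⟩
      obtain ⟨ε1, hε1, h1⟩ := hright
      obtain ⟨ε2, hε2, M2, h2⟩ := hleft
      refine ⟨min ε1 ε2, max (f t) M2, lt_min hε1 hε2, fun _ s hs hls hrs => ?_⟩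
      rcases le_or_gt t s with h | h
      · have : s < t + ε1 := lt_of_lt_of_le hrs (by
          have := min_le_left ε1 ε2; linarith)
        exact le_trans (le_of_eq (h1 s hs h this)) (le_max_left _ _)
      · have : t - ε2 < s := by have := min_le_right ε1 ε2; linarith
        exact le_trans (h2 s hs this h) (le_max_right _ _)
    · exact ⟨1, 0, one_pos, fun h => absurd h ht⟩
  choose ε M hεM using key
  obtain ⟨T, hTmem, hTcov⟩ := isCompact_Icc.elim_nhds_subcover
    (fun t => Ioo (t - ε t) (t + ε t))
    (fun t _ => Ioo_mem_nhds (by linarith [(hεM t).1]) (by linarith [(hεM t).1]))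
  refine ⟨T.sup M, fun s hs => ?_⟩
  have := hTcov hs
  simp only [mem_iUnion, mem_Ioo] at this
  obtain ⟨t, htT, hst1, hst2⟩ := this
  exact le_trans ((hεM t).2 (hTmem t htT) s hs hst1 hst2) (Finset.le_sup htT)

/-- Key lemma: if `y ∘ l = x` on `[a,b]` for a reparametrization `l`, then the jump
counts agree and the jump times of `y` are the `l`-images of those of `x`. -/
lemma main_step (a b : ℝ) (hab : a < b) (x y : ℝ → ℕ) (l : ℝ → ℝ)
    (hl : l ∈ SkorokhodReparams a b) (hxy : ∀ t ∈ Icc a b, y (l t) = x t)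
    (k : ℕ) (τ : ℕ → ℝ) (hτmono : StrictMonoOn τ (Set.Iio k))
    (hτ : ∀ t, JumpTime a b x t ↔ ∃ i < k, τ i = t)
    (k' : ℕ) (τ' : ℕ → ℝ) (hτ'mono : StrictMonoOn τ' (Set.Iio k'))
    (hτ' : ∀ t, JumpTime a b y t ↔ ∃ i < k', τ' i = t) :
    k' = k ∧ ∀ i < k, τ' i = l (τ i) := by
  obtain ⟨hlc, hlm, hlmaps, hla, hlb⟩ := hl
  have habIcc : a ≤ b := le_of_lt hab
  have haI : a ∈ Icc a b := ⟨le_refl a, habIcc⟩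
  have hsurj : ∀ u ∈ Icc a b, ∃ t ∈ Icc a b, l t = u := by
    intro u hu
    have hu' : u ∈ Icc (l a) (l b) := by rw [hla, hlb]; exact hu
    obtain ⟨t, ht, hlt⟩ := intermediate_value_Icc habIcc hlc hu'
    exact ⟨t, ht, hlt⟩
  have fwd : ∀ t, JumpTime a b x t → JumpTime a b y (l t) := by
    rintro t ⟨htI, hjump⟩
    have htIcc : t ∈ Icc a b := ⟨le_of_lt htI.1, htI.2⟩
    have hlta : a < l t := hla ▸ hlm haI htIcc htI.1
    have hltb : l t ≤ b := (hlmaps htIcc).2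
    refine ⟨⟨hlta, hltb⟩, fun ε hε => ?_⟩
    set u0 := max a (l t - ε) with hu0def
    have hu0I : u0 ∈ Icc a b := ⟨le_max_left _ _, max_le habIcc (by linarith)⟩
    have hu0lt : u0 < l t := max_lt hlta (by linarith)
    obtain ⟨t0, ht0I, ht0⟩ := hsurj u0 hu0I
    have ht0t : t0 < t := (hlm.lt_iff_lt ht0I htIcc).mp (ht0 ▸ hu0lt)
    obtain ⟨s, hsI, hs1, hs2, hsne⟩ := hjump (t - t0) (by linarith)
    refine ⟨l s, hlmaps hsI, ?_, hlm hsI htIcc hs2, ?_⟩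
    · have h1 : l t0 < l s := hlm ht0I hsI (by linarith)
      have h2 : l t - ε ≤ u0 := le_max_right _ _
      rw [ht0] at h1; linarith
    · rw [hxy s hsI, hxy t htIcc]; exact hsne
  have bwd : ∀ t ∈ Icc a b, JumpTime a b y (l t) → JumpTime a b x t := by
    rintro t htIcc ⟨hltI, hjump⟩
    have hta : a < t := by
      have h1 : l a < l t := by rw [hla]; exact hltI.1
      exact (hlm.lt_iff_lt haI htIcc).mp h1
    refine ⟨⟨hta, htIcc.2⟩, fun ε hε => ?_⟩
    set t0 := max a (t - ε) with ht0def
    have ht0t : t0 < t := max_lt hta (by linarith)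
    have ht0I : t0 ∈ Icc a b := ⟨le_max_left _ _, le_of_lt (lt_of_lt_of_le ht0t htIcc.2)⟩
    have hll : l t0 < l t := hlm ht0I htIcc ht0t
    obtain ⟨s', hs'I, hs'1, hs'2, hs'ne⟩ := hjump (l t - l t0) (by linarith)
    obtain ⟨s, hsI, rfl⟩ := hsurj s' hs'I
    have hs1 : t0 < s := (hlm.lt_iff_lt ht0I hsI).mp (by linarith)
    have hs2 : s < t := (hlm.lt_iff_lt hsI htIcc).mp hs'2
    refine ⟨s, hsI, by linarith [le_max_right a (t - ε)], hs2, ?_⟩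
    rw [← hxy s hsI, ← hxy t htIcc]; exact hs'ne
  have bwd' : ∀ u, JumpTime a b y u → ∃ t, JumpTime a b x t ∧ l t = u := by
    intro u hu
    have huI : u ∈ Icc a b := ⟨le_of_lt hu.1.1, hu.1.2⟩
    obtain ⟨t, htI, rfl⟩ := hsurj u huI
    exact ⟨t, bwd t htI hu, rfl⟩
  have hJsub : {t | JumpTime a b x t} ⊆ Icc a b :=
    fun t ht => ⟨le_of_lt ht.1.1, ht.1.2⟩
  have hJset : {u | JumpTime a b y u} = l '' {t | JumpTime a b x t} := by
    ext u
    constructor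
    · intro hu
      obtain ⟨t, ht, hlt⟩ := bwd' u hu
      exact ⟨t, ht, hlt⟩
    · rintro ⟨t, ht, rfl⟩
      exact fwd t ht
  have hJx : {t | JumpTime a b x t} = τ '' (Set.Iio k) := by
    ext t
    simp only [mem_setOf_eq, hτ t, mem_image, mem_Iio]
  have hJy : {t | JumpTime a b y t} = τ' '' (Set.Iio k') := by
    ext t
    simp only [mem_setOf_eq, hτ' t, mem_image, mem_Iio]
  have hncardIio : ∀ m : ℕ, (Set.Iio m : Set ℕ).ncard = m := by
    intro m
    rw [← Finset.coe_Iio, Set.ncard_coe_finset, Nat.card_Iio]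
  have hk : k' = k := by
    have h1 : (Set.Iio k' : Set ℕ).ncard = ({t | JumpTime a b y t}).ncard := by
      rw [hJy, Set.ncard_image_of_injOn hτ'mono.injOn]
    have h2 : ({t | JumpTime a b y t}).ncard = ({t | JumpTime a b x t}).ncard := by
      rw [hJset, Set.ncard_image_of_injOn (hlm.injOn.mono hJsub)]
    have h3 : ({t | JumpTime a b x t}).ncard = (Set.Iio k : Set ℕ).ncard := by
      rw [hJx, Set.ncard_image_of_injOn hτmono.injOn]
    have := h1.trans (h2.trans h3)
    rwa [hncardIio, hncardIio] at this
  subst hk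
  refine ⟨rfl, fun i hi => ?_⟩
  have hτIcc : ∀ j < k', τ j ∈ Icc a b := by
    intro j hj
    have : JumpTime a b x (τ j) := (hτ (τ j)).mpr ⟨j, hj, rfl⟩
    exact ⟨le_of_lt this.1.1, this.1.2⟩
  classical
  set S : Finset ℝ := (Finset.Iio k').image τ' with hSdef
  have hScard : S.card = k' := by
    rw [hSdef, Finset.card_image_of_injOn (by rw [Finset.coe_Iio]; exact hτ'mono.injOn),
      Nat.card_Iio]
  have hfmem : ∀ j : Fin k', τ' j.val ∈ S :=
    fun j => Finset.mem_image.mpr ⟨j.val, Finset.mem_Iio.mpr j.2, rfl⟩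
  have hgmem : ∀ j : Fin k', l (τ j.val) ∈ S := by
    intro j
    have hjx : JumpTime a b x (τ j.val) := (hτ (τ j.val)).mpr ⟨j.val, j.2, rfl⟩
    obtain ⟨i', hi', h⟩ := (hτ' (l (τ j.val))).mp (fwd _ hjx)
    exact Finset.mem_image.mpr ⟨i', Finset.mem_Iio.mpr hi', h⟩
  have hfmono : StrictMono (fun j : Fin k' => τ' j.val) :=
    fun i j hij => hτ'mono i.2 j.2 hij
  have hgmono : StrictMono (fun j : Fin k' => l (τ j.val)) :=
    fun i j hij => hlm (hτIcc i.val i.2) (hτIcc j.val j.2) (hτmono i.2 j.2 hij)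
  have hfu := Finset.orderEmbOfFin_unique hScard hfmem hfmono
  have hgu := Finset.orderEmbOfFin_unique hScard hgmem hgmono
  have : (fun j : Fin k' => τ' j.val) = (fun j : Fin k' => l (τ j.val)) := hfu.trans hgu.symm
  exact congrFun this ⟨i, hi⟩

/-- If càdlàg `ℕ`-valued functions `xₙ` converge to a non-constant càdlàg `x` in the
Skorokhod metric on `[a,b]`, then eventually `xₙ` has the same number of jumps as `x`,
and the values of `xₙ` at its `i`-th jump time converge to the value of `x` at its
`i`-th jump time. -/
theorem stmt2 (a b : ℝ) (hab : a < b) (x : ℝ → ℕ) (xn : ℕ → ℝ → ℕ)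
    (hx : CadlagOn a b x) (hxn : ∀ n, CadlagOn a b (xn n))
    (k : ℕ) (τ : ℕ → ℝ) (hτmono : StrictMonoOn τ (Set.Iio k))
    (hτ : ∀ t, JumpTime a b x t ↔ ∃ i < k, τ i = t)
    (kn : ℕ → ℕ) (τn : ℕ → ℕ → ℝ)
    (hτnmono : ∀ n, StrictMonoOn (τn n) (Set.Iio (kn n)))
    (hτn : ∀ n t, JumpTime a b (xn n) t ↔ ∃ i < kn n, τn n i = t)
    (hnonconst : ∃ s ∈ Icc a b, ∃ t ∈ Icc a b, x s ≠ x t)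
    (hconv : Tendsto (fun n => skorokhodDist a b (xn n) x) atTop (nhds 0)) :
    (∀ᶠ n in atTop, kn n = k) ∧
    ∀ i < k, Tendsto (fun n => ((xn n (τn n i) : ℝ))) atTop (nhds ((x (τ i) : ℝ))) := by
  have hev : ∀ᶠ n in atTop, skorokhodDist a b (xn n) x < 1 :=
    hconv (Iio_mem_nhds one_pos)
  obtain ⟨Mx, hMx⟩ := cadlag_bdd a b x hx
  have key : ∀ᶠ n in atTop, kn n = k ∧ ∀ i < k, xn n (τn n i) = x (τ i) := by
    filter_upwards [hev] with n hn
    obtain ⟨Mn, hMn⟩ := cadlag_bdd a b (xn n) (hxn n)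
    have hne : ({d | 0 ≤ d ∧ ∃ l ∈ SkorokhodReparams a b,
        (∀ t ∈ Icc a b, |l t - t| ≤ d) ∧
        (∀ t ∈ Icc a b, |(xn n (l t) : ℝ) - (x t : ℝ)| ≤ d)}).Nonempty := by
      refine ⟨max (Mn : ℝ) (Mx : ℝ), le_max_of_le_left (Nat.cast_nonneg _),
        id, ⟨continuousOn_id, fun s _ t _ h => h, fun t ht => ht, rfl, rfl⟩,
        fun t _ => by simp, fun t ht => ?_⟩
      have h1 : (xn n t : ℝ) ≤ Mn := Nat.cast_le.mpr (hMn t ht)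
      have h2 : (x t : ℝ) ≤ Mx := Nat.cast_le.mpr (hMx t ht)
      have h3 : (0 : ℝ) ≤ xn n t := Nat.cast_nonneg _
      have h4 : (0 : ℝ) ≤ x t := Nat.cast_nonneg _
      have h5 : (Mn : ℝ) ≤ max (Mn : ℝ) (Mx : ℝ) := le_max_left _ _
      have h6 : (Mx : ℝ) ≤ max (Mn : ℝ) (Mx : ℝ) := le_max_right _ _
      rw [abs_le]
      constructor <;> simp only [id] <;> linarith
    rw [skorokhodDist] at hn
    obtain ⟨d, hd, hdlt⟩ := exists_lt_of_csInf_lt hne hn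
    obtain ⟨hd0, l, hlmem, hl1, hl2⟩ := hd
    have heq : ∀ t ∈ Icc a b, xn n (l t) = x t := fun t ht =>
      nat_eq_of_abs_lt_one (lt_of_le_of_lt (hl2 t ht) hdlt)
    obtain ⟨hk, hτeq⟩ := main_step a b hab x (xn n) l hlmem heq k τ hτmono hτ
      (kn n) (τn n) (hτnmono n) (hτn n)
    refine ⟨hk, fun i hi => ?_⟩
    have hτiIcc : τ i ∈ Icc a b := by
      have : JumpTime a b x (τ i) := (hτ (τ i)).mpr ⟨i, hi, rfl⟩
      exact ⟨le_of_lt this.1.1, this.1.2⟩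
    rw [hτeq i hi, heq (τ i) hτiIcc]
  refine ⟨key.mono fun n h => h.1, fun i hi => ?_⟩
  refine Tendsto.congr' ?_ tendsto_const_nhds
  filter_upwards [key] with n h
  rw [h.2 i hi]
end

section
/- Let f ∈ C^I be an ensemble of continuous functions indexed by integers, let x ≤ y in ℝ and m < ℓ in ℤ. Then for any fixed z ∈ [x,y], the last passage value satisfies f[(x,ℓ)→(y,m)] = max over k ∈ {m,…,ℓ} of ( f[(x,ℓ)→(z,k)] + f[(z,k)→(y,m)] ). -/
/-!
A path from `(x, l)` to `(y, m)` sits on some line `k` at the intermediate time `z`. Clamping its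
jump times from above and from below by `z` cuts it into a path `(x, l) → (z, k)` and a path
`(z, k) → (y, m)`; the increment of `f k` splits at `z` and all other increments are untouched,
so the lengths add up. Conversely two such paths concatenate into one path `(x, l) → (y, m)`.
-/

/-- The last passage value `f[(x,l) → (y,m)]` over an ensemble `f : ℤ → ℝ → ℝ` of
continuous functions: the supremum of path lengths over all non-increasing paths from
`(x,l)` to `(y,m)`, a path being recorded by its jump times `t i` (the time the path
jumps from line `i+1` to line `i`), with the conventions `t (m-1) = y`, `t l = x`. -/
noncomputable def lpp (f : ℤ → ℝ → ℝ) (x : ℝ) (l : ℤ) (y : ℝ) (m : ℤ) : ℝ :=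
  sSup {v | ∃ t : ℤ → ℝ, t (m - 1) = y ∧ t l = x ∧
    (∀ i, m - 1 ≤ i → i ≤ l → t i ∈ Set.Icc x y) ∧
    (∀ i j, m - 1 ≤ i → i ≤ j → j ≤ l → t j ≤ t i) ∧
    v = ∑ i ∈ Finset.Icc m l, (f i (t (i - 1)) - f i (t i))}

open Set

noncomputable def pathLength (f : ℤ → ℝ → ℝ) (t : ℤ → ℝ) (m l : ℤ) : ℝ :=
  ∑ i ∈ Finset.Icc m l, (f i (t (i - 1)) - f i (t i))

/-- Jump times `t` of a path from `(x, l)` to `(y, m)`, encoded as in `lpp`. -/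
structure IsPath (t : ℤ → ℝ) (x : ℝ) (l : ℤ) (y : ℝ) (m : ℤ) : Prop where
  start : t l = x
  finish : t (m - 1) = y
  mapsTo : MapsTo t (Icc (m - 1) l) (Icc x y)
  antitoneOn : AntitoneOn t (Icc (m - 1) l)

lemma Int.sum_Icc_consecutive {M : Type*} [AddCommMonoid M] (g : ℤ → M) {a b c : ℤ}
    (hab : a ≤ b + 1) (hbc : b ≤ c) :
    ∑ i ∈ Finset.Icc a b, g i + ∑ i ∈ Finset.Icc (b + 1) c, g i = ∑ i ∈ Finset.Icc a c, g i := by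
  rw [← Finset.sum_union (Finset.disjoint_left.2 fun i h₁ h₂ => by
    rw [Finset.mem_Icc] at h₁ h₂; omega)]
  congr 1
  ext i
  simp only [Finset.mem_union, Finset.mem_Icc]
  omega

section PathLength

variable {f : ℤ → ℝ → ℝ} {s t t₁ t₂ : ℤ → ℝ} {m k l : ℤ}

lemma pathLength_self (f : ℤ → ℝ → ℝ) (t : ℤ → ℝ) (k : ℤ) :
    pathLength f t k k = f k (t (k - 1)) - f k (t k) := by
  simp [pathLength]

lemma pathLength_add_pathLength (f : ℤ → ℝ → ℝ) (t : ℤ → ℝ) (hmk : m ≤ k + 1) (hkl : k ≤ l) :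
    pathLength f t m k + pathLength f t (k + 1) l = pathLength f t m l :=
  Int.sum_Icc_consecutive _ hmk hkl

lemma pathLength_congr (h : EqOn s t (Icc (m - 1) l)) :
    pathLength f s m l = pathLength f t m l :=
  Finset.sum_congr rfl fun i hi => by
    rw [Finset.mem_Icc] at hi
    rw [h ⟨by omega, by omega⟩, h ⟨by omega, hi.2⟩]

/-- Only the increment on line `k` is shared by the two pieces, and it splits at the common
time `t₁ (k - 1) = t₂ k`. -/
lemma pathLength_eq_add_of_eqOn (hmk : m ≤ k) (hkl : k ≤ l) (h₁ : EqOn s t₁ (Icc k l))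
    (h₂ : EqOn s t₂ (Icc (m - 1) (k - 1))) (hk : t₁ (k - 1) = t₂ k) :
    pathLength f s m l = pathLength f t₂ m k + pathLength f t₁ k l := by
  have hs₂ : pathLength f s m (k - 1) = pathLength f t₂ m (k - 1) := pathLength_congr h₂
  have hs₁ : pathLength f s (k + 1) l = pathLength f t₁ (k + 1) l :=
    pathLength_congr (h₁.mono (Icc_subset_Icc (by omega) le_rfl))
  have hsk : s k = t₁ k := h₁ ⟨le_rfl, hkl⟩
  have hsk' : s (k - 1) = t₂ (k - 1) := h₂ ⟨by omega, le_rfl⟩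
  have hs := pathLength_add_pathLength f s (m := m) (k := k - 1) (l := l) (by omega) (by omega)
  have hs' := pathLength_add_pathLength f s (m := k) (by omega) hkl
  have ht₂ := pathLength_add_pathLength f t₂ (m := m) (k := k - 1) (l := k) (by omega) (by omega)
  have ht₁ := pathLength_add_pathLength f t₁ (m := k) (by omega) hkl
  simp only [sub_add_cancel, pathLength_self, hsk, hsk', hk] at hs hs' ht₂ ht₁
  linarith

end PathLength

namespace IsPath

variable {t t₁ t₂ : ℤ → ℝ} {x y z : ℝ} {m k l : ℤ}

lemma drop_at_end (hxy : x ≤ y) (hml : m ≤ l) :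
    IsPath (fun i => if l ≤ i then x else y) x l y m where
  start := if_pos le_rfl
  finish := if_neg (by omega)
  mapsTo i _ := by
    dsimp only
    split_ifs
    exacts [⟨le_rfl, hxy⟩, ⟨hxy, le_rfl⟩]
  antitoneOn i _ j _ hij := by
    dsimp only
    split_ifs <;> first | exact le_rfl | exact hxy | omega

lemma le (ht : IsPath t x l y m) (hml : m ≤ l) : x ≤ y :=
  let h := ht.mapsTo (show l ∈ Icc (m - 1) l from ⟨by omega, le_rfl⟩)
  h.1.trans h.2

lemma append (h₁ : IsPath t₁ x l z k) (h₂ : IsPath t₂ z k y m) (hmk : m ≤ k) (hkl : k ≤ l) :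
    IsPath (fun i => if k ≤ i then t₁ i else t₂ i) x l y m where
  start := by simp only [if_pos hkl, h₁.start]
  finish := by simp only [if_neg (show ¬k ≤ m - 1 by omega), h₂.finish]
  mapsTo i hi := by
    dsimp only
    split_ifs with hki
    · exact Icc_subset_Icc le_rfl (h₂.le hmk) (h₁.mapsTo ⟨by omega, hi.2⟩)
    · exact Icc_subset_Icc (h₁.le hkl) le_rfl (h₂.mapsTo ⟨hi.1, by omega⟩)
  antitoneOn i hi j hj hij := by
    dsimp only
    split_ifs with hkj hki hki
    · exact h₁.antitoneOn ⟨by omega, hi.2⟩ ⟨by omega, hj.2⟩ hij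
    · exact (h₁.mapsTo ⟨by omega, hj.2⟩).2.trans (h₂.mapsTo ⟨hi.1, by omega⟩).1
    · omega
    · exact h₂.antitoneOn ⟨hi.1, by omega⟩ ⟨hj.1, by omega⟩ hij

lemma pathLength_append (f : ℤ → ℝ → ℝ) (h₁ : IsPath t₁ x l z k) (h₂ : IsPath t₂ z k y m)
    (hmk : m ≤ k) (hkl : k ≤ l) :
    pathLength f (fun i => if k ≤ i then t₁ i else t₂ i) m l =
      pathLength f t₂ m k + pathLength f t₁ k l :=
  pathLength_eq_add_of_eqOn hmk hkl (fun i hi => if_pos hi.1)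
    (fun i hi => if_neg (by have := hi.2; omega)) (h₁.finish.trans h₂.start.symm)

lemma exists_crossing (ht : IsPath t x l y m) (hml : m ≤ l) (hzx : x ≤ z) (hzy : z ≤ y) :
    ∃ k, m ≤ k ∧ k ≤ l ∧ t k ≤ z ∧ z ≤ t (k - 1) := by
  obtain ⟨k, ⟨hmk, hkz⟩, hmin⟩ := Int.exists_least_of_bdd (P := fun i => m ≤ i ∧ t i ≤ z)
    ⟨m, fun _ h => h.1⟩ ⟨l, hml, ht.start.le.trans hzx⟩
  refine ⟨k, hmk, hmin l ⟨hml, ht.start.le.trans hzx⟩, hkz, ?_⟩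
  rcases hmk.eq_or_lt with rfl | hmk
  · exact ht.finish.symm ▸ hzy
  · by_contra! h
    have := hmin (k - 1) ⟨by omega, h.le⟩
    omega

lemma min_const (ht : IsPath t x l y m) (hxz : x ≤ z) (hz : z ≤ t (k - 1)) (hmk : m ≤ k) :
    IsPath (fun i => min (t i) z) x l z k where
  start := by simp only [ht.start, min_eq_left hxz]
  finish := min_eq_right hz
  mapsTo i hi := ⟨le_min (ht.mapsTo ⟨by have := hi.1; omega, hi.2⟩).1 hxz, min_le_right _ _⟩
  antitoneOn i hi j hj hij := min_le_min_right z <|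
    ht.antitoneOn ⟨by have := hi.1; omega, hi.2⟩ ⟨by have := hj.1; omega, hj.2⟩ hij

lemma max_const (ht : IsPath t x l y m) (hzy : z ≤ y) (hz : t k ≤ z) (hkl : k ≤ l) :
    IsPath (fun i => max (t i) z) z k y m where
  start := max_eq_right hz
  finish := by simp only [ht.finish, max_eq_left hzy]
  mapsTo i hi := ⟨le_max_right _ _, max_le (ht.mapsTo ⟨hi.1, by have := hi.2; omega⟩).2 hzy⟩
  antitoneOn i hi j hj hij := max_le_max_right z <|
    ht.antitoneOn ⟨hi.1, by have := hi.2; omega⟩ ⟨hj.1, by have := hj.2; omega⟩ hij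

lemma exists_split (f : ℤ → ℝ → ℝ) (ht : IsPath t x l y m) (hml : m ≤ l) (hxz : x ≤ z)
    (hzy : z ≤ y) :
    ∃ k, m ≤ k ∧ k ≤ l ∧ ∃ t₁ t₂, IsPath t₁ x l z k ∧ IsPath t₂ z k y m ∧
      pathLength f t m l = pathLength f t₂ m k + pathLength f t₁ k l := by
  obtain ⟨k, hmk, hkl, hkz, hzk⟩ := ht.exists_crossing hml hxz hzy
  refine ⟨k, hmk, hkl, _, _, ht.min_const hxz hzk hmk, ht.max_const hzy hkz hkl,
    pathLength_eq_add_of_eqOn hmk hkl (fun i hi => ?_) (fun i hi => ?_) ?_⟩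
  · exact (min_eq_left <| (ht.antitoneOn ⟨by omega, hkl⟩
      ⟨by have := hi.1; omega, hi.2⟩ hi.1).trans hkz).symm
  · exact (max_eq_left <| hzk.trans <| ht.antitoneOn ⟨hi.1, by have := hi.2; omega⟩
      ⟨by omega, by omega⟩ hi.2).symm
  · simp only [min_eq_right hzk, max_eq_right hkz]

end IsPath

section LastPassage

variable {f : ℤ → ℝ → ℝ} {t : ℤ → ℝ} {x y : ℝ} {m l : ℤ}

lemma lpp_eq_sSup (f : ℤ → ℝ → ℝ) (x : ℝ) (l : ℤ) (y : ℝ) (m : ℤ) :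
    lpp f x l y m = sSup ((pathLength f · m l) '' {t | IsPath t x l y m}) := by
  refine congrArg sSup (Set.ext fun v => ⟨?_, ?_⟩)
  · rintro ⟨t, hy, hx, hmaps, hanti, rfl⟩
    exact ⟨t, ⟨hx, hy, fun i hi => hmaps i hi.1 hi.2,
      fun i hi j hj hij => hanti i j hi.1 hij hj.2⟩, rfl⟩
  · rintro ⟨t, ⟨hx, hy, hmaps, hanti⟩, rfl⟩
    exact ⟨t, hy, hx, fun i h₁ h₂ => hmaps ⟨h₁, h₂⟩,
      fun i j hi hij hj => hanti ⟨hi, hij.trans hj⟩ ⟨hi.trans hij, hj⟩ hij, rfl⟩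

lemma bddAbove_pathLength (hf : ∀ i, ContinuousOn (f i) (Icc x y)) :
    BddAbove ((pathLength f · m l) '' {t | IsPath t x l y m}) := by
  refine ⟨∑ i ∈ Finset.Icc m l, (sSup (f i '' Icc x y) - sInf (f i '' Icc x y)), ?_⟩
  rintro _ ⟨t, ht, rfl⟩
  refine Finset.sum_le_sum fun i hi => ?_
  rw [Finset.mem_Icc] at hi
  have hc : IsCompact (f i '' Icc x y) := isCompact_Icc.image_of_continuousOn (hf i)
  have hsup := le_csSup hc.bddAbove
    ⟨_, ht.mapsTo (show i - 1 ∈ Icc (m - 1) l from ⟨by omega, by omega⟩), rfl⟩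
  have hinf := csInf_le hc.bddBelow
    ⟨_, ht.mapsTo (show i ∈ Icc (m - 1) l from ⟨by omega, hi.2⟩), rfl⟩
  linarith

lemma pathLength_le_lpp (hf : ∀ i, ContinuousOn (f i) (Icc x y)) (ht : IsPath t x l y m) :
    pathLength f t m l ≤ lpp f x l y m :=
  (lpp_eq_sSup f x l y m).symm ▸ le_csSup (bddAbove_pathLength hf) ⟨t, ht, rfl⟩

lemma lpp_le {c : ℝ} (hxy : x ≤ y) (hml : m ≤ l)
    (h : ∀ t, IsPath t x l y m → pathLength f t m l ≤ c) : lpp f x l y m ≤ c :=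
  (lpp_eq_sSup f x l y m).symm ▸ csSup_le
    (Set.Nonempty.image _ ⟨_, IsPath.drop_at_end hxy hml⟩)
    (by rintro _ ⟨t, ht, rfl⟩; exact h t ht)

lemma lpp_add_lpp_le {z : ℝ} {k : ℤ} (hf : ∀ i, ContinuousOn (f i) (Icc x y))
    (hxz : x ≤ z) (hzy : z ≤ y) (hmk : m ≤ k) (hkl : k ≤ l) :
    lpp f x l z k + lpp f z k y m ≤ lpp f x l y m := by
  suffices ∀ t₁, IsPath t₁ x l z k → lpp f z k y m ≤ lpp f x l y m - pathLength f t₁ k l by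
    linarith [lpp_le hxz hkl fun t₁ ht₁ => le_sub_comm.1 (this t₁ ht₁)]
  refine fun t₁ ht₁ => lpp_le hzy hmk fun t₂ ht₂ => ?_
  have := pathLength_le_lpp hf (ht₁.append ht₂ hmk hkl)
  rw [IsPath.pathLength_append f ht₁ ht₂ hmk hkl] at this
  linarith

end LastPassage

/-- Metric composition law for last passage values at a fixed spatial point `z`:
`f[(x,l)→(y,m)] = max_{k ∈ {m,…,l}} ( f[(x,l)→(z,k)] + f[(z,k)→(y,m)] )`. -/
theorem stmt3 (f : ℤ → ℝ → ℝ) (hf : ∀ i, Continuous (f i))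
    (x y : ℝ) (hxy : x ≤ y) (m l : ℤ) (hml : m < l)
    (z : ℝ) (hz : z ∈ Set.Icc x y) :
    lpp f x l y m =
      (Finset.Icc m l).sup' (Finset.nonempty_Icc.2 hml.le)
        (fun k => lpp f x l z k + lpp f z k y m) := by
  obtain ⟨hxz, hzy⟩ := hz
  have hf' : ∀ {a b}, ∀ i, ContinuousOn (f i) (Icc a b) := fun i => (hf i).continuousOn
  refine le_antisymm (lpp_le hxy hml.le fun t ht => ?_) (Finset.sup'_le _ _ fun k hk => ?_)
  · obtain ⟨k, hmk, hkl, t₁, t₂, ht₁, ht₂, hlen⟩ := ht.exists_split f hml.le hxz hzy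
    calc pathLength f t m l = pathLength f t₁ k l + pathLength f t₂ m k := by rw [hlen, add_comm]
      _ ≤ lpp f x l z k + lpp f z k y m :=
        add_le_add (pathLength_le_lpp hf' ht₁) (pathLength_le_lpp hf' ht₂)
      _ ≤ _ := Finset.le_sup' (fun k => lpp f x l z k + lpp f z k y m)
        (Finset.mem_Icc.2 ⟨hmk, hkl⟩)
  · rw [Finset.mem_Icc] at hk
    exact lpp_add_lpp_le hf' hxz hzy hk.1 hk.2
end

section
/- Let h₀: ℝ → ℝ ∪ {−∞} be a t₀-finitary initial condition: h₀ ≢ −∞, h₀ is bounded above on compacts, and (h₀(x) − x²/t₀)/|x| → −∞ as |x| → ∞. Suppose L: ℝ × ℝ → ℝ satisfies the growth bound |L(x,y) + (x−y)²/t| ≤ C(1 + |x|^{1/5} + |y|^{1/5}) for all x,y, for a constant C and fixed t ∈ (0,t₀]. Then h_t(y) := sup_{x∈ℝ} ( L(x,y) + h₀(x) ) is finite for every y ∈ ℝ, and for any compact K ⊂ ℝ there is a compact interval [L₀,R₀] (depending on C, K, t₀) such that h_t(y) = sup_{x∈[L₀,R₀]} ( L(x,y) + h₀(x) ) for all y ∈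 K. -/
/-! The decay condition on `h₀` beats the parabola `-(x - y)²/t` only up to a linear term, and the
directed-landscape error is sublinear, so for `|y| ≤ Y` the integrand `L(x, y) + h₀(x)` is at most
`C(3 + Y) - |x|` once `|x|` is large. Far enough out it therefore drops below its (finite) value at a
point `x₀` with `h₀(x₀) > -∞`, and the supremum lives on a compact interval around `x₀`, where
`h₀` is bounded above. -/

open Set

lemma Real.rpow_le_one_add_self {z p : ℝ} (hz : 0 ≤ z) (hp₀ : 0 ≤ p) (hp₁ : p ≤ 1) :
    z ^ p ≤ 1 + z := by
  rcases le_or_gt z 1 with h | h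
  · linarith [Real.rpow_le_one hz h hp₀]
  · linarith [Real.rpow_le_self_of_one_le h.le hp₁]

lemma mul_one_add_rpow_add_rpow_le {C p : ℝ} (hC : 0 ≤ C) (hp₀ : 0 ≤ p) (hp₁ : p ≤ 1)
    (x y : ℝ) : C * (1 + |x| ^ p + |y| ^ p) ≤ C * (3 + |x| + |y|) := by
  have hx := Real.rpow_le_one_add_self (abs_nonneg x) hp₀ hp₁
  have hy := Real.rpow_le_one_add_self (abs_nonneg y) hp₀ hp₁
  have hsum : 1 + |x| ^ p + |y| ^ p ≤ 3 + |x| + |y| := by linarith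
  exact mul_le_mul_of_nonneg_left hsum hC

section GrowthBound

variable {l x y t t₀ C X Y : ℝ}

lemma le_of_abs_add_sq_div_le (ht : 0 ≤ t) (hC : 0 ≤ C) (hx : |x| ≤ X) (hy : |y| ≤ Y)
    (hl : |l + (x - y) ^ 2 / t| ≤ C * (3 + |x| + |y|)) : l ≤ C * (3 + X + Y) := by
  have hC' : C * (3 + |x| + |y|) ≤ C * (3 + X + Y) := by gcongr
  linarith [(abs_le.mp hl).2, div_nonneg (sq_nonneg (x - y)) ht]

lemma neg_le_of_abs_add_sq_div_le (ht : 0 ≤ t) (hC : 0 ≤ C) (hx : |x| ≤ X) (hy : |y| ≤ Y)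
    (hl : |l + (x - y) ^ 2 / t| ≤ C * (3 + |x| + |y|)) :
    -((X + Y) ^ 2 / t) - C * (3 + X + Y) ≤ l := by
  have hC' : C * (3 + |x| + |y|) ≤ C * (3 + X + Y) := by gcongr
  have hxy : |x - y| ≤ X + Y := (abs_sub x y).trans (add_le_add hx hy)
  have hsq : (x - y) ^ 2 / t ≤ (X + Y) ^ 2 / t := by
    refine div_le_div_of_nonneg_right ?_ ht
    rw [← sq_abs]
    exact pow_le_pow_left₀ (abs_nonneg _) hxy 2
  linarith [(abs_le.mp hl).1]

/-- The constant `2Y/t₀ + C + 1` is what the decay of `h₀` has to beat: `2Y/t₀` absorbs the cross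
term of `(x - y)²/t₀`, `C` the error of `L`, and the extra `1` leaves the decay `-|x|`. -/
lemma add_sub_mul_abs_le_of_abs_add_sq_div_le (ht : 0 < t) (htt₀ : t ≤ t₀) (hC : 0 ≤ C)
    (hy : |y| ≤ Y) (hl : |l + (x - y) ^ 2 / t| ≤ C * (3 + |x| + |y|)) :
    l + (x ^ 2 / t₀ - (2 * Y / t₀ + C + 1) * |x|) ≤ C * (3 + Y) - |x| := by
  have ht₀ : 0 < t₀ := ht.trans_le htt₀
  have hC' : C * (3 + |x| + |y|) ≤ C * (3 + |x| + Y) := by gcongr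
  have hsq : (x - y) ^ 2 / t₀ ≤ (x - y) ^ 2 / t := by gcongr
  have hcross : x * y ≤ |x| * Y :=
    (le_abs_self _).trans (by rw [abs_mul]; gcongr)
  have hexpand : x ^ 2 / t₀ - (x - y) ^ 2 / t₀ ≤ 2 * |x| * Y / t₀ := by
    rw [← sub_div]
    gcongr
    nlinarith [sq_nonneg y]
  have hsplit : (2 * Y / t₀ + C + 1) * |x| = 2 * |x| * Y / t₀ + C * |x| + |x| := by ring
  linarith [(abs_le.mp hl).2]

end GrowthBound

theorem sSup_range_eq_sSup_image_of_le {α β : Type*} [CompleteLattice α] {f : β → α} {s : Set β}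
    {x₀ : β} (hx₀ : x₀ ∈ s) (h : ∀ x ∉ s, f x ≤ f x₀) : sSup (range f) = sSup (f '' s) := by
  refine le_antisymm (sSup_le (forall_mem_range.2 fun x => ?_))
    (sSup_le_sSup (image_subset_range _ _))
  by_cases hx : x ∈ s
  · exact le_sSup (mem_image_of_mem f hx)
  · exact (h x hx).trans (le_sSup (mem_image_of_mem f hx₀))

section Localization

variable {t₀ t C : ℝ} {h₀ : ℝ → EReal} {L : ℝ → ℝ → ℝ}

lemma exists_forall_lt_abs_le (ht : 0 < t) (htt₀ : t ≤ t₀) (hC : 0 ≤ C)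
    (hdecay : ∀ R : ℝ, ∃ M : ℝ, ∀ x : ℝ, M ≤ |x| → h₀ x ≤ ((x ^ 2 / t₀ - R * |x| : ℝ) : EReal))
    (hL : ∀ x y : ℝ, |L x y + (x - y) ^ 2 / t| ≤ C * (3 + |x| + |y|))
    {x₀ : ℝ} (hx₀ : h₀ x₀ ≠ ⊥) (Y : ℝ) :
    ∃ N, |x₀| ≤ N ∧ ∀ y, |y| ≤ Y → ∀ x, N < |x| →
      ((L x y : ℝ) : EReal) + h₀ x ≤ ((L x₀ y : ℝ) : EReal) + h₀ x₀ := by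
  obtain ⟨v, -, hv⟩ := EReal.exists_between_coe_real (bot_lt_iff_ne_bot.2 hx₀)
  obtain ⟨M, hM⟩ := hdecay (2 * Y / t₀ + C + 1)
  set B := -((|x₀| + Y) ^ 2 / t) - C * (3 + |x₀| + Y) + v
  refine ⟨max (max M |x₀|) (C * (3 + Y) - B), (le_max_right _ _).trans (le_max_left _ _),
    fun y hy x hx => ?_⟩
  have hxM : M ≤ |x| := ((le_max_left _ _).trans (le_max_left _ _)).trans hx.le
  have hxB : C * (3 + Y) - B < |x| := (le_max_right _ _).trans_lt hx
  have htail := add_sub_mul_abs_le_of_abs_add_sq_div_le ht htt₀ hC hy (hL x y)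
  have hlow := neg_le_of_abs_add_sq_div_le ht.le hC le_rfl hy (hL x₀ y)
  calc ((L x y : ℝ) : EReal) + h₀ x
      ≤ ((L x y + (x ^ 2 / t₀ - (2 * Y / t₀ + C + 1) * |x|) : ℝ) : EReal) := by
        rw [EReal.coe_add]
        exact add_le_add le_rfl (hM x hxM)
    _ ≤ ((L x₀ y + v : ℝ) : EReal) := by exact_mod_cast (by linarith)
    _ ≤ ((L x₀ y : ℝ) : EReal) + h₀ x₀ := by
        rw [EReal.coe_add]
        exact add_le_add le_rfl hv.le

lemma exists_sSup_range_eq_sSup_image_Icc (ht : 0 < t) (htt₀ : t ≤ t₀) (hC : 0 ≤ C)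
    (hne : ∃ x, h₀ x ≠ ⊥)
    (hdecay : ∀ R : ℝ, ∃ M : ℝ, ∀ x : ℝ, M ≤ |x| → h₀ x ≤ ((x ^ 2 / t₀ - R * |x| : ℝ) : EReal))
    (hL : ∀ x y : ℝ, |L x y + (x - y) ^ 2 / t| ≤ C * (3 + |x| + |y|)) (Y : ℝ) :
    ∃ N, 0 ≤ N ∧ ∀ y, |y| ≤ Y →
      sSup (range fun x => ((L x y : ℝ) : EReal) + h₀ x) =
        sSup ((fun x => ((L x y : ℝ) : EReal) + h₀ x) '' Icc (-N) N) := by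
  obtain ⟨x₀, hx₀⟩ := hne
  obtain ⟨N, hx₀N, htail⟩ := exists_forall_lt_abs_le ht htt₀ hC hdecay hL hx₀ Y
  refine ⟨N, (abs_nonneg x₀).trans hx₀N, fun y hy => ?_⟩
  refine sSup_range_eq_sSup_image_of_le (abs_le.mp hx₀N) fun x hx => ?_
  exact htail y hy x (lt_of_not_ge fun hxN => hx (abs_le.mp hxN))

lemma sSup_image_Icc_ne_top (ht : 0 ≤ t) (hC : 0 ≤ C)
    (hbdd : ∀ M : ℝ, ∃ D : ℝ, ∀ x ∈ Icc (-M) M, h₀ x ≤ (D : EReal))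
    (hL : ∀ x y : ℝ, |L x y + (x - y) ^ 2 / t| ≤ C * (3 + |x| + |y|)) (y N : ℝ) :
    sSup ((fun x => ((L x y : ℝ) : EReal) + h₀ x) '' Icc (-N) N) ≠ ⊤ := by
  obtain ⟨D, hD⟩ := hbdd N
  refine ne_top_of_le_ne_top (EReal.coe_ne_top (C * (3 + N + |y|) + D)) ?_
  refine sSup_le (forall_mem_image.2 fun x hx => ?_)
  rw [EReal.coe_add]
  exact add_le_add
    (EReal.coe_le_coe_iff.2 (le_of_abs_add_sq_div_le ht hC (abs_le.2 hx) le_rfl (hL x y)))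
    (hD x hx)

end Localization

theorem stmt17_general (t₀ t C : ℝ) (ht : 0 < t) (htt₀ : t ≤ t₀) (hC : 0 ≤ C)
    (h₀ : ℝ → EReal) (hne : ∃ x, h₀ x ≠ ⊥)
    (hbdd : ∀ M : ℝ, ∃ D : ℝ, ∀ x ∈ Set.Icc (-M) M, h₀ x ≤ (D : EReal))
    (hdecay : ∀ R : ℝ, ∃ M : ℝ, ∀ x : ℝ, M ≤ |x| →
      h₀ x ≤ ((x ^ 2 / t₀ - R * |x| : ℝ) : EReal))
    (L : ℝ → ℝ → ℝ)
    (hL : ∀ x y : ℝ, |L x y + (x - y) ^ 2 / t| ≤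
      C * (1 + |x| ^ ((1 : ℝ) / 5) + |y| ^ ((1 : ℝ) / 5))) :
    (∀ y : ℝ, sSup (Set.range fun x => ((L x y : ℝ) : EReal) + h₀ x) ≠ ⊤ ∧
      sSup (Set.range fun x => ((L x y : ℝ) : EReal) + h₀ x) ≠ ⊥) ∧
    (∀ K : Set ℝ, IsCompact K → ∃ a b : ℝ, a ≤ b ∧ ∀ y ∈ K,
      sSup (Set.range fun x => ((L x y : ℝ) : EReal) + h₀ x) =
        sSup ((fun x => ((L x y : ℝ) : EReal) + h₀ x) '' Set.Icc a b)) := by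
  have hlin : ∀ x y : ℝ, |L x y + (x - y) ^ 2 / t| ≤ C * (3 + |x| + |y|) := fun x y =>
    (hL x y).trans (mul_one_add_rpow_add_rpow_le hC (by norm_num) (by norm_num) x y)
  have hloc := exists_sSup_range_eq_sSup_image_Icc ht htt₀ hC hne hdecay hlin
  refine ⟨fun y => ⟨?_, ?_⟩, fun K hK => ?_⟩
  · obtain ⟨N, -, hN⟩ := hloc |y|
    rw [hN y le_rfl]
    exact sSup_image_Icc_ne_top ht.le hC hbdd hlin y N
  · obtain ⟨x₀, hx₀⟩ := hne
    exact ne_bot_of_le_ne_bot (EReal.add_ne_bot_iff.2 ⟨EReal.coe_ne_bot _, hx₀⟩)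
      (le_sSup ⟨x₀, rfl⟩)
  · obtain ⟨Y, hY⟩ := hK.isBounded.exists_norm_le
    obtain ⟨N, hN₀, hN⟩ := hloc Y
    exact ⟨-N, N, by linarith, fun y hy => hN y (hY y hy)⟩

/-- Deterministic localization lemma for the KPZ fixed point variational formula.
`h₀ : ℝ → ℝ ∪ {−∞}` is a `t₀`-finitary initial condition (not identically `−∞`, never
`+∞`, bounded above on compacts, with `(h₀(x) − x²/t₀)/|x| → −∞` as `|x| → ∞`, stated in
its equivalent epsilon form), and `L` satisfies the directed-landscape growth bound
`|L(x,y) + (x−y)²/t| ≤ C(1 + |x|^{1/5} + |y|^{1/5})` for a fixed `t ∈ (0,t₀]`. Then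
`h_t(y) = sup_x (L(x,y) + h₀(x))` is finite for every `y`, and for every compact `K`
there is a compact interval `[a,b]` on which the supremum may be taken, uniformly over
`y ∈ K`. -/
theorem stmt17 (t₀ t C : ℝ) (ht₀ : 0 < t₀) (ht : 0 < t) (htt₀ : t ≤ t₀) (hC : 0 ≤ C)
    (h₀ : ℝ → EReal) (hne : ∃ x, h₀ x ≠ ⊥) (htop : ∀ x, h₀ x ≠ ⊤)
    (hbdd : ∀ M : ℝ, ∃ D : ℝ, ∀ x ∈ Set.Icc (-M) M, h₀ x ≤ (D : EReal))
    (hdecay : ∀ R : ℝ, ∃ M : ℝ, ∀ x : ℝ, M ≤ |x| →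
      h₀ x ≤ ((x ^ 2 / t₀ - R * |x| : ℝ) : EReal))
    (L : ℝ → ℝ → ℝ)
    (hL : ∀ x y : ℝ, |L x y + (x - y) ^ 2 / t| ≤
      C * (1 + |x| ^ ((1 : ℝ) / 5) + |y| ^ ((1 : ℝ) / 5))) :
    (∀ y : ℝ, sSup (Set.range fun x => ((L x y : ℝ) : EReal) + h₀ x) ≠ ⊤ ∧
      sSup (Set.range fun x => ((L x y : ℝ) : EReal) + h₀ x) ≠ ⊥) ∧
    (∀ K : Set ℝ, IsCompact K → ∃ a b : ℝ, a ≤ b ∧ ∀ y ∈ K,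
      sSup (Set.range fun x => ((L x y : ℝ) : EReal) + h₀ x) =
        sSup ((fun x => ((L x y : ℝ) : EReal) + h₀ x) '' Set.Icc a b)) :=
  stmt17_general t₀ t C ht htt₀ hC h₀ hne hbdd hdecay L hL
end
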